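/- Let S be a ℤ^k-graded ring with grading 𝒜 : (Fin k → ℤ) → AddSubgroup S, and let R = S_+ be its positive subring, the subring generated by (equal to the direct sum of) the components 𝒜 v with v ∈ ℕ^k (all coordinates non-negative). Suppose that for every non-zero v ∈ Fin k → ℕ and every non-zero x ∈ 𝒜 v there exists y ∈ 𝒜 (−v) with x * y ≠ 0. Let A be a right ideal of R whose right annihilator in R, A^r = { t ∈ R | ∀ a ∈ A, a * t = 0 }, is non-trivial. Then A^r contains a non-zero element h of degree 0, i.e. h ∈ 𝒜 0, h ≠ 0, and a * h = 0 for all a ∈ A. -/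

import Mathlib

/-- `s` belongs to the positive subring `S₊` of the `ℤ^k`-graded ring `S`: all of its
non-zero homogeneous components have degree in `ℕ^k` (all coordinates non-negative). -/
def MemPositiveSubring {k : ℕ} {S : Type*} [Ring S]
    (𝒜 : (Fin k → ℤ) → AddSubgroup S) [GradedRing 𝒜] (s : S) : Prop :=
  ∀ v : Fin k → ℤ, (DirectSum.decompose 𝒜 s v : S) ≠ 0 → ∀ i : Fin k, 0 ≤ v i

/-!
Choose a non-zero element `t` of the annihilator with the fewest homogeneous components. If a
positive homogeneous `x` kills one component of `t`, then `x * t` lies in the annihilator and has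
fewer components, so `x * t = 0`. Order `ℤ^k` lexicographically: the top component of `s * t` is
the product of the top components of `s` and `t`, so for `s * t = 0` with `s` positive the top
component of `s` kills `t`, and peeling off top components shows that every component of `s`
kills `t`. Hence every `a ∈ A` kills every component `t_v` of `t`; as `v ∈ ℕ^k`, the hypothesis
on `S` provides `y` of degree `-v` with `t_v * y` a non-zero annihilator of degree `0`.
-/

open DirectSum Finset

namespace GradedRing

section Decomposition

variable {ι σ M : Type*} [DecidableEq ι] [SetLike σ M] (𝒜 : ι → σ)

theorem exists_coe_decompose_ne_zero [AddCommMonoid M] [AddSubmonoidClass σ M]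
    [Decomposition 𝒜] {s : M} (hs : s ≠ 0) : ∃ i, (decompose 𝒜 s i : M) ≠ 0 := by
  classical
  by_contra! h
  exact hs (by rw [← sum_support_decompose 𝒜 s]; exact sum_eq_zero fun i _ => h i)

theorem coe_decompose_sub_coe_decompose [AddCommGroup M] [AddSubgroupClass σ M]
    [Decomposition 𝒜] (s : M) (i j : ι) :
    (decompose 𝒜 (s - decompose 𝒜 s i) j : M) = if j = i then 0 else decompose 𝒜 s j := by
  rw [decompose_sub, DirectSum.sub_apply, AddSubgroupClass.coe_sub]
  split_ifs with hji
  · rw [hji, decompose_of_mem_same 𝒜 (SetLike.coe_mem _), sub_self, ZeroMemClass.coe_zero]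
  · rw [decompose_of_mem_ne 𝒜 (SetLike.coe_mem _) (Ne.symm hji), sub_zero]

end Decomposition

section Semiring

variable {ι σ S : Type*} [DecidableEq ι] [Semiring S] [SetLike σ S] [AddSubmonoidClass σ S]
  (𝒜 : ι → σ)

theorem coe_decompose_mul_add_of_forall_le [AddCommMonoid ι] [LinearOrder ι]
    [IsOrderedCancelAddMonoid ι] [GradedRing 𝒜] {a b : S} {i j : ι}
    (ha : ∀ i', (decompose 𝒜 a i' : S) ≠ 0 → i' ≤ i)
    (hb : ∀ j', (decompose 𝒜 b j' : S) ≠ 0 → j' ≤ j) :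
    (decompose 𝒜 (a * b) (i + j) : S) = decompose 𝒜 a i * decompose 𝒜 b j := by
  classical
  rw [decompose_mul, coe_mul_apply]
  refine sum_eq_single (i, j) (fun ⟨i', j'⟩ hij hne => ?_) (fun hij => ?_)
  · simp only [mem_filter, mem_product, DFinsupp.mem_support_iff, ne_eq,
      ZeroMemClass.coe_eq_zero.symm] at hij
    obtain ⟨⟨hi', hj'⟩, hsum⟩ := hij
    exact absurd (Prod.ext_iff.2 ((add_eq_add_iff_eq_and_eq (ha i' hi') (hb j' hj')).1 hsum)) hne
  · by_contra hne
    exact hij (by simpa using And.intro (left_ne_zero_of_mul hne) (right_ne_zero_of_mul hne))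

variable {𝒜}

theorem card_support_decompose_mul_lt [AddCommGroup ι] [GradedRing 𝒜]
    [∀ (i) (x : 𝒜 i), Decidable (x ≠ 0)] {x t : S} {i j : ι} (hx : x ∈ 𝒜 i)
    (htj : (decompose 𝒜 t j : S) ≠ 0) (hxtj : x * decompose 𝒜 t j = 0) :
    #(decompose 𝒜 (x * t)).support < #(decompose 𝒜 t).support := by
  have hsub : (decompose 𝒜 (x * t)).support ⊆ ((decompose 𝒜 t).support.erase j).image (i + ·) := by
    intro z hz
    have hz' : x * (decompose 𝒜 t (z - i) : S) ≠ 0 := by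
      rw [← coe_decompose_mul_add_of_left_mem 𝒜 hx, add_sub_cancel]
      simpa using hz
    refine mem_image.2 ⟨z - i, mem_erase.2 ⟨?_, ?_⟩, add_sub_cancel _ _⟩
    · rintro hzj
      exact hz' (hzj ▸ hxtj)
    · simpa using right_ne_zero_of_mul hz'
  calc #(decompose 𝒜 (x * t)).support
      ≤ #(((decompose 𝒜 t).support.erase j).image (i + ·)) := card_le_card hsub
    _ ≤ #((decompose 𝒜 t).support.erase j) := card_image_le
    _ < #(decompose 𝒜 t).support := card_erase_lt_of_mem (by simpa using htj)

end Semiring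

section Ring

variable {ι σ S : Type*} [DecidableEq ι] [Ring S] [SetLike σ S] [AddSubgroupClass σ S]
  (𝒜 : ι → σ)

section Supported

variable [AddMonoid ι] [GradedRing 𝒜] (M : AddSubmonoid ι)

/-- For `M = ℕ^k ⊆ ℤ^k` this is the positive subring `S₊`. -/
def supportedSubring : Subring S where
  carrier := {s | ∀ i, (decompose 𝒜 s i : S) ≠ 0 → i ∈ M}
  zero_mem' i h := by simp at h
  one_mem' i h := by
    by_contra hi
    exact h (decompose_of_mem_ne 𝒜 SetLike.GradedOne.one_mem fun h0 => hi (h0 ▸ M.zero_mem))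
  add_mem' {a b} ha hb i h := by
    rw [decompose_add, DirectSum.add_apply, AddMemClass.coe_add] at h
    by_cases hai : (decompose 𝒜 a i : S) = 0
    · exact hb i (by simpa [hai] using h)
    · exact ha i hai
  neg_mem' {a} ha i h := ha i fun h0 => h (by rw [decompose_neg]; exact neg_eq_zero.2 h0)
  mul_mem' {a b} ha hb i h := by
    classical
    rw [decompose_mul, coe_mul_apply] at h
    obtain ⟨⟨i₁, i₂⟩, hi, hne⟩ := exists_ne_zero_of_sum_ne_zero h
    rw [mem_filter] at hi
    rw [← hi.2]
    exact M.add_mem (ha i₁ (left_ne_zero_of_mul hne)) (hb i₂ (right_ne_zero_of_mul hne))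

variable {𝒜 M}

theorem mem_supportedSubring_of_mem {x : S} {i : ι} (hx : x ∈ 𝒜 i) (hi : i ∈ M) :
    x ∈ supportedSubring 𝒜 M := fun j hj => by
  by_contra hj'
  exact hj (decompose_of_mem_ne 𝒜 hx fun hij => hj' (hij ▸ hi))

theorem coe_decompose_mem_supportedSubring {s : S} (hs : s ∈ supportedSubring 𝒜 M) (i : ι) :
    (decompose 𝒜 s i : S) ∈ supportedSubring 𝒜 M := by
  by_cases h : (decompose 𝒜 s i : S) = 0
  · rw [h]
    exact zero_mem _
  · exact mem_supportedSubring_of_mem (SetLike.coe_mem _) (hs i h)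

end Supported

variable {𝒜}

section Minimal

variable [AddCommGroup ι] [GradedRing 𝒜] [∀ (i) (x : 𝒜 i), Decidable (x ≠ 0)]
  {M : AddSubmonoid ι} {L : Set S} {t : S}

theorem mul_eq_zero_of_mul_coe_decompose_eq_zero
    (hL : ∀ x ∈ supportedSubring 𝒜 M, ∀ t ∈ L, x * t ∈ L) (htL : t ∈ L)
    (hmin : ∀ t' ∈ L, t' ≠ 0 → #(decompose 𝒜 t).support ≤ #(decompose 𝒜 t').support)
    {x : S} {i j : ι} (hx : x ∈ 𝒜 i) (hxM : x ∈ supportedSubring 𝒜 M)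
    (htj : (decompose 𝒜 t j : S) ≠ 0) (hxtj : x * decompose 𝒜 t j = 0) : x * t = 0 := by
  by_contra hxt
  exact (hmin _ (hL x hxM t htL) hxt).not_gt (card_support_decompose_mul_lt hx htj hxtj)

theorem coe_decompose_mul_eq_zero_of_forall_le [LinearOrder ι] [IsOrderedAddMonoid ι]
    (hL : ∀ x ∈ supportedSubring 𝒜 M, ∀ t ∈ L, x * t ∈ L) (htL : t ∈ L) (ht0 : t ≠ 0)
    (hmin : ∀ t' ∈ L, t' ≠ 0 → #(decompose 𝒜 t).support ≤ #(decompose 𝒜 t').support)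
    {s : S} (hs : s ∈ supportedSubring 𝒜 M) (hst : s * t = 0) {a : ι}
    (ha : ∀ i, (decompose 𝒜 s i : S) ≠ 0 → i ≤ a) : (decompose 𝒜 s a : S) * t = 0 := by
  obtain ⟨j₀, hj₀⟩ := exists_coe_decompose_ne_zero 𝒜 ht0
  obtain ⟨j, hj, hjmax⟩ := (decompose 𝒜 t).support.exists_max_image id ⟨j₀, by simpa using hj₀⟩
  refine mul_eq_zero_of_mul_coe_decompose_eq_zero hL htL hmin (SetLike.coe_mem _)
    (coe_decompose_mem_supportedSubring hs a) (by simpa using hj) ?_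
  rw [← coe_decompose_mul_add_of_forall_le 𝒜 (j := j) ha
    fun j' hj' => hjmax j' (by simpa using hj'), hst, decompose_zero, DirectSum.zero_apply,
    ZeroMemClass.coe_zero]

theorem coe_decompose_mul_eq_zero_of_mul_eq_zero [LinearOrder ι] [IsOrderedAddMonoid ι]
    (hL : ∀ x ∈ supportedSubring 𝒜 M, ∀ t ∈ L, x * t ∈ L) (htL : t ∈ L) (ht0 : t ≠ 0)
    (hmin : ∀ t' ∈ L, t' ≠ 0 → #(decompose 𝒜 t).support ≤ #(decompose 𝒜 t').support)
    {s : S} (hs : s ∈ supportedSubring 𝒜 M) (hst : s * t = 0) (i : ι) :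
    (decompose 𝒜 s i : S) * t = 0 := by
  suffices ∀ F : Finset ι, ∀ s ∈ supportedSubring 𝒜 M, (∀ i, (decompose 𝒜 s i : S) ≠ 0 → i ∈ F) →
      s * t = 0 → ∀ i, (decompose 𝒜 s i : S) * t = 0 from
    this (decompose 𝒜 s).support s hs (fun i hi => by simpa using hi) hst i
  intro F
  induction F using Finset.induction_on_max with
  | empty =>
    intro s _ hsF _ i
    by_contra h
    exact notMem_empty i (hsF i (left_ne_zero_of_mul h))
  | insert a F hlt ih =>
    intro s hs hsF hst
    have hsa := coe_decompose_mul_eq_zero_of_forall_le hL htL ht0 hmin hs hst fun i hi => by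
      rcases mem_insert.1 (hsF i hi) with rfl | hiF
      exacts [le_rfl, (hlt i hiF).le]
    have ih' := ih (s - decompose 𝒜 s a) (sub_mem hs (coe_decompose_mem_supportedSubring hs a))
      (fun i hi => ?_) (by rw [sub_mul, hst, hsa, sub_zero])
    · intro i
      by_cases hia : i = a
      · rw [hia]
        exact hsa
      · simpa only [coe_decompose_sub_coe_decompose, if_neg hia] using ih' i
    · rw [coe_decompose_sub_coe_decompose] at hi
      split_ifs at hi with hia
      · exact absurd rfl hi
      · exact (mem_insert.1 (hsF i hi)).resolve_left hia

end Minimal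

theorem exists_homogeneous_ne_zero_forall_mul_eq_zero [AddCommGroup ι] [LinearOrder ι]
    [IsOrderedAddMonoid ι] [GradedRing 𝒜] {M : AddSubmonoid ι} {A : Set S}
    (hAM : A ⊆ supportedSubring 𝒜 M) (hA : ∀ a ∈ A, ∀ r ∈ supportedSubring 𝒜 M, a * r ∈ A)
    {t : S} (htM : t ∈ supportedSubring 𝒜 M) (ht0 : t ≠ 0) (hAt : ∀ a ∈ A, a * t = 0) :
    ∃ i ∈ M, ∃ h ∈ 𝒜 i, h ≠ 0 ∧ ∀ a ∈ A, a * h = 0 := by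
  classical
  set L := {t ∈ supportedSubring 𝒜 M | ∀ a ∈ A, a * t = 0}
  have hL : ∀ x ∈ supportedSubring 𝒜 M, ∀ t ∈ L, x * t ∈ L := fun x hx t ⟨htM, hAt⟩ =>
    ⟨mul_mem hx htM, fun a ha => by rw [← mul_assoc]; exact hAt _ (hA a ha x hx)⟩
  obtain ⟨u, ⟨huL, hu0⟩, hmin⟩ := (measure fun t => #(decompose 𝒜 t).support).wf.has_min
    (L \ {0}) ⟨t, ⟨htM, hAt⟩, ht0⟩
  have hmin' : ∀ t' ∈ L, t' ≠ 0 → #(decompose 𝒜 u).support ≤ #(decompose 𝒜 t').support :=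
    fun t' ht' ht'0 => not_lt.1 (hmin t' ⟨ht', ht'0⟩)
  obtain ⟨j, hj⟩ := exists_coe_decompose_ne_zero 𝒜 hu0
  refine ⟨j, huL.1 j hj, _, SetLike.coe_mem _, hj, fun a ha => ?_⟩
  rw [← sum_support_decompose 𝒜 a, sum_mul]
  refine sum_eq_zero fun i _ => ?_
  rw [← coe_decompose_mul_add_of_left_mem 𝒜 (SetLike.coe_mem _),
    coe_decompose_mul_eq_zero_of_mul_eq_zero hL huL hu0 hmin' (hAM ha) (huL.2 a ha),
    decompose_zero, DirectSum.zero_apply, ZeroMemClass.coe_zero]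

end Ring

end GradedRing

/-- Reindexing along `Lex` equips `ℤ^k` with a total order compatible with addition. -/
instance GradedRing.lex {ι σ S : Type*} [DecidableEq ι] [AddMonoid ι] [Semiring S] [SetLike σ S]
    [AddSubmonoidClass σ S] (𝒜 : ι → σ) [GradedRing 𝒜] : GradedRing fun i : Lex ι => 𝒜 (ofLex i) :=
  ‹GradedRing 𝒜›

theorem memPositiveSubring_iff {k : ℕ} {S : Type*} [Ring S]
    (𝒜 : (Fin k → ℤ) → AddSubgroup S) [GradedRing 𝒜] {s : S} :
    MemPositiveSubring 𝒜 s ↔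
      s ∈ GradedRing.supportedSubring (fun v : Lex (Fin k → ℤ) => 𝒜 (ofLex v))
        ((AddSubmonoid.pi Set.univ fun _ => AddSubmonoid.nonneg ℤ).comap (ofLexAddEquiv _)) :=
  ⟨fun hs v hv => by simpa [AddSubmonoid.mem_pi] using hs (ofLex v) hv,
    fun hs v hv => by simpa [AddSubmonoid.mem_pi] using hs (toLex v) hv⟩

/-- Let `R = S₊` be the positive subring of a `ℤ^k`-graded ring `S` such that for every
non-zero `v ∈ ℕ^k` and non-zero `x ∈ 𝒜 v` there is `y ∈ 𝒜 (-v)` with `x * y ≠ 0`.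
If a right ideal `A` of `R` has non-trivial right annihilator in `R`, then that
annihilator contains a non-zero element of degree `0`. -/
theorem exists_degree_zero_annihilator_of_positive_subring
    {k : ℕ} {S : Type*} [Ring S]
    (𝒜 : (Fin k → ℤ) → AddSubgroup S) [GradedRing 𝒜]
    (hS : ∀ v : Fin k → ℕ, v ≠ 0 → ∀ x ∈ 𝒜 (fun i => (v i : ℤ)), x ≠ 0 →
      ∃ y ∈ 𝒜 (-(fun i => (v i : ℤ))), x * y ≠ 0)
    (A : AddSubgroup S) (hAsub : ∀ a ∈ A, MemPositiveSubring 𝒜 a)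
    (hA : ∀ a ∈ A, ∀ t : S, MemPositiveSubring 𝒜 t → a * t ∈ A)
    (hann : ∃ t : S, MemPositiveSubring 𝒜 t ∧ t ≠ 0 ∧ ∀ a ∈ A, a * t = 0) :
    ∃ h ∈ 𝒜 (0 : Fin k → ℤ), h ≠ 0 ∧ ∀ a ∈ A, a * h = 0 := by
  obtain ⟨t, htM, ht0, hAt⟩ := hann
  obtain ⟨v, hv, h, hh, hh0, hAh⟩ := GradedRing.exists_homogeneous_ne_zero_forall_mul_eq_zero
    (fun a ha => (memPositiveSubring_iff 𝒜).1 (hAsub a ha))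
    (fun a ha r hr => hA a ha r ((memPositiveSubring_iff 𝒜).2 hr))
    ((memPositiveSubring_iff 𝒜).1 htM) ht0 hAt
  have hv' : ∀ i, 0 ≤ ofLex v i := by simpa [AddSubmonoid.mem_pi] using hv
  lift ofLex v to Fin k → ℕ using hv' with n
  rcases eq_or_ne n 0 with rfl | hn0
  · exact ⟨h, hh, hh0, hAh⟩
  · obtain ⟨y, hy, hhy⟩ := hS n hn0 h hh hh0
    exact ⟨h * y, by simpa using SetLike.mul_mem_graded hh hy, hhy,
      fun a ha => by rw [← mul_assoc, hAh a ha, zero_mul]⟩
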